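/- An alternating r-diamond forces r alternations: if a board contains an r-diamond whose layer i (tiles at board distance i-1 from the centre) is coloured x for odd i and y for even i, with x ≠ y and x,y appearing nowhere else on the board, then any sequence of Flood-It moves that floods the board must contain at least r moves whose colours are x or y, alternating appropriately; more precisely it contains the alternating string of the diamond's layer colours (read outside-in) as a subsequence. -/

import Mathlib

/-- Tiles of an `n × n` board. -/
abbrev Tile (n : ℕ) := Fin n × Fin n

/-- Two tiles are adjacent if they differ by a unit step (horizontally or vertically). -/
def adjT {n : ℕ} (p q : Tile n) : Prop :=
  ((p.1 : ℤ) - (q.1 : ℤ)).natAbs + ((p.2 : ℤ) - (q.2 : ℤ)).natAbs = 1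

/-- A board assigns one of `c` colours to each tile. -/
abbrev Board (n c : ℕ) := Tile n → Fin c

/-- `SameColorConn B p q` : `q` is in the monochromatic connected region of `B`
containing `p`. -/
def SameColorConn {n c : ℕ} (B : Board n c) (p q : Tile n) : Prop :=
  Relation.ReflTransGen (fun a b => adjT a b ∧ B a = B b) p q

open Classical in
/-- A Flood-It move: recolour the monochromatic region containing `o` with colour `k`. -/
noncomputable def flood {n c : ℕ} (B : Board n c) (o : Tile n) (k : Fin c) : Board n c :=
  fun p => if SameColorConn B o p then k else B p

/-- Play a sequence of Flood-It moves (flooding from `o`). -/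
noncomputable def playMoves {n c : ℕ} (o : Tile n) : Board n c → List (Fin c) → Board n c
  | B, [] => B
  | B, k :: ks => playMoves o (flood B o k) ks

/-- A board is flooded when it is monochromatic. -/
def Flooded {n c : ℕ} (B : Board n c) : Prop := ∀ p q : Tile n, B p = B q

/-- `floodMoves B o` : the minimum number of moves (flooding from `o`) needed to
flood the board `B`. -/
noncomputable def floodMoves {n c : ℕ} (B : Board n c) (o : Tile n) : ℕ :=
  sInf {l : ℕ | ∃ ms : List (Fin c), ms.length = l ∧ Flooded (playMoves o B ms)}

/-- Grid (taxicab) distance between two tiles. -/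
def gdist {n : ℕ} (p q : Tile n) : ℕ :=
  ((p.1 : ℤ) - (q.1 : ℤ)).natAbs + ((p.2 : ℤ) - (q.2 : ℤ)).natAbs

/-!
Flooding from a corner outside the diamond, the flooded region is connected and contains the corner,
so a path inside it from the corner to a diamond tile at distance `d` from the centre meets every
layer at distance between `d` and `r - 1`. A diamond tile `p` at distance `d` joins the region in a
move of colour `B p`, and at that moment its neighbouring outer layer (which has the other colour)
must already have been reached, by an earlier move. Induction on the moves therefore gives the
layer colours from the outside in, as a subsequence.
-/

variable {n c : ℕ}

lemma adjT.gdist_le {p q : Tile n} (t : Tile n) (h : adjT p q) : gdist t p ≤ gdist t q + 1 := by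
  unfold adjT gdist at *
  omega

namespace SameColorConn

variable {B : Board n c} {o p : Tile n}

lemma color_eq (h : SameColorConn B o p) : B o = B p := by
  induction h with
  | refl => rfl
  | tail _ hstep ih => exact ih.trans hstep.2

lemma flood (k : Fin c) (h : SameColorConn B o p) : SameColorConn (flood B o k) o p := by
  induction h with
  | refl => exact .refl
  | @tail a b hoa hab ih =>
    refine ih.tail ⟨hab.1, ?_⟩
    have hoa' : SameColorConn B o a := hoa
    have hob : SameColorConn B o b := hoa.tail hab
    simp [_root_.flood, hoa', hob]

lemma playMoves (ms : List (Fin c)) (h : SameColorConn B o p) :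
    SameColorConn (playMoves o B ms) o p := by
  induction ms generalizing B with
  | nil => exact h
  | cons k ks ih => exact ih (h.flood k)

lemma exists_gdist_eq (t : Tile n) (h : SameColorConn B o p) {v : ℕ}
    (hpv : gdist t p ≤ v) (hvo : v ≤ gdist t o) :
    ∃ q, SameColorConn B o q ∧ gdist t q = v := by
  induction h with
  | refl => exact ⟨o, .refl, by omega⟩
  | @tail a b hoa hab ih =>
    by_cases hv : gdist t b = v
    · exact ⟨b, hoa.tail hab, hv⟩
    · exact ih (by have := hab.1.gdist_le t; omega)

end SameColorConn

lemma flood_apply_of_not_sameColorConn {B : Board n c} {o p : Tile n} (k : Fin c)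
    (h : ¬ SameColorConn B o p) : flood B o k p = B p := by
  simp [flood, h]

lemma playMoves_append (o : Tile n) (B : Board n c) (ms ms' : List (Fin c)) :
    playMoves o B (ms ++ ms') = playMoves o (playMoves o B ms) ms' := by
  induction ms generalizing B with
  | nil => rfl
  | cons k ks ih => exact ih _

lemma playMoves_apply_of_not_sameColorConn {o p : Tile n} (ms : List (Fin c)) {B : Board n c}
    (h : ¬ SameColorConn (playMoves o B ms) o p) : playMoves o B ms p = B p := by
  induction ms generalizing B with
  | nil => rfl
  | cons k ks ih =>
    have hB : ¬ SameColorConn B o p := fun hB => h (hB.playMoves (k :: ks))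
    exact (ih h).trans (flood_apply_of_not_sameColorConn k hB)

lemma eq_of_sameColorConn_playMoves_append_singleton {o p : Tile n} {B : Board n c}
    {ms : List (Fin c)} {k : Fin c}
    (hnew : SameColorConn (playMoves o B (ms ++ [k])) o p)
    (hold : ¬ SameColorConn (playMoves o B ms) o p) : B p = k := by
  rw [playMoves_append] at hnew
  calc B p = playMoves o B ms p := (playMoves_apply_of_not_sameColorConn ms hold).symm
    _ = flood (playMoves o B ms) o k p := (flood_apply_of_not_sameColorConn k hold).symm
    _ = flood (playMoves o B ms) o k o := hnew.color_eq.symm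
    _ = k := if_pos .refl

lemma sameColorConn_origin_of_flooded (hn : 1 ≤ n) {B : Board n c} (hB : Flooded B) (p : Tile n) :
    SameColorConn B (⟨0, hn⟩, ⟨0, hn⟩) p := by
  obtain ⟨⟨a, ha⟩, ⟨b, hb⟩⟩ := p
  induction a with
  | zero =>
    induction b with
    | zero => exact .refl
    | succ b ih => exact (ih (by omega)).tail ⟨by simp [adjT], hB _ _⟩
  | succ a ih => exact (ih (by omega)).tail ⟨by simp [adjT], hB _ _⟩

lemma ite_mod_two_ne_ite_succ_mod_two {α : Type*} {x y : α} (hxy : x ≠ y) (d : ℕ) :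
    (if d % 2 = 0 then x else y) ≠ if (d + 1) % 2 = 0 then x else y := by
  rcases Nat.mod_two_eq_zero_or_one d with h | h <;>
    simp [h, Nat.succ_mod_two_eq_zero_iff, hxy, hxy.symm]

lemma ite_succ_mod_two_eq_one (d : ℕ) {α : Type*} (x y : α) :
    (if (d + 1) % 2 = 1 then x else y) = if d % 2 = 0 then x else y := by
  rcases Nat.mod_two_eq_zero_or_one d with h | h <;> simp [h, Nat.succ_mod_two_eq_one_iff]

/-- Entry `j` is the colour of the diamond layer at distance `r - 1 - j` from the centre, so this
lists the colours of the outermost `m` layers, outside-in. -/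
def alternatingString {α : Type*} (x y : α) (r m : ℕ) : List α :=
  List.ofFn fun j : Fin m => if (r - (j : ℕ)) % 2 = 1 then x else y

lemma alternatingString_succ {α : Type*} (x y : α) (r m : ℕ) :
    alternatingString x y r (m + 1) =
      alternatingString x y r m ++ [if (r - m) % 2 = 1 then x else y] := by
  rw [alternatingString, List.ofFn_succ', List.concat_eq_append]
  rfl

lemma alternatingString_sublist_of_sameColorConn {B : Board n c} {t o : Tile n} {r : ℕ}
    {x y : Fin c} (hxy : x ≠ y)
    (hdiamond : ∀ p : Tile n, gdist t p < r → B p = if gdist t p % 2 = 0 then x else y)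
    (ho : B o ≠ x ∧ B o ≠ y) (hro : r ≤ gdist t o) (ms : List (Fin c)) {p : Tile n}
    (hp : gdist t p < r) (hconn : SameColorConn (playMoves o B ms) o p) :
    (alternatingString x y r (r - gdist t p)).Sublist ms := by
  induction ms using List.reverseRecOn generalizing p with
  | nil =>
    have := hconn.color_eq
    rw [playMoves, hdiamond p hp] at this
    split at this <;> simp_all
  | append_singleton ms k ih =>
    by_cases hold : SameColorConn (playMoves o B ms) o p
    · exact (ih hp hold).trans (List.sublist_append_left ms [k])
    have hpk : B p = k := eq_of_sameColorConn_playMoves_append_singleton hconn hold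
    set d := gdist t p
    have houter : (alternatingString x y r (r - (d + 1))).Sublist ms := by
      rcases Nat.lt_or_ge (d + 1) r with hd | hd
      · obtain ⟨q, hq, hqd⟩ := hconn.exists_gdist_eq t (v := d + 1) (by omega) (by omega)
        have hqold : SameColorConn (playMoves o B ms) o q := by
          by_contra hqold
          have hqp : B p = B q := by
            rw [eq_of_sameColorConn_playMoves_append_singleton hq hqold, hpk]
          rw [hdiamond q (by omega), hdiamond p hp, hqd] at hqp
          exact ite_mod_two_ne_ite_succ_mod_two hxy d hqp
        simpa [hqd] using ih (by omega) hqold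
      · simp [alternatingString, Nat.sub_eq_zero_of_le hd]
    have hlast : (if (r - (r - (d + 1))) % 2 = 1 then x else y) = k := by
      rw [← hpk, hdiamond p hp, show r - (r - (d + 1)) = d + 1 by omega]
      exact ite_succ_mod_two_eq_one d x y
    rw [show r - d = r - (d + 1) + 1 by omega, alternatingString_succ, hlast]
    exact houter.append (List.Sublist.refl [k])

/-- if the board contains an alternating r-diamond centred at `t`
(layer i, the tiles at distance i-1 from `t`, has colour x for odd i and y for
even i, x ≠ y, and x,y appear nowhere else on the board), and the top-left tile
is outside the diamond, then any move sequence flooding the board contains as a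
subsequence the alternating string of the diamond's layer colours read
outside-in (in particular at least r moves of colours x or y). -/
theorem stmt13 (n c : ℕ) (hn : 1 ≤ n) (B : Board n c) (t : Tile n) (r : ℕ) (hr : 1 ≤ r)
    (x y : Fin c) (hxy : x ≠ y)
    (hdiamond : ∀ p : Tile n, gdist t p < r →
      B p = if gdist t p % 2 = 0 then x else y)
    (houtside : ∀ p : Tile n, r ≤ gdist t p → B p ≠ x ∧ B p ≠ y)
    (horigin : r ≤ gdist t (⟨0, hn⟩, ⟨0, hn⟩))
    (ms : List (Fin c)) (hms : Flooded (playMoves (⟨0, hn⟩, ⟨0, hn⟩) B ms)) :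
    (List.ofFn fun j : Fin r => if (r - (j : ℕ)) % 2 = 1 then x else y).Sublist ms := by
  have hcentre : gdist t t = 0 := by simp [gdist]
  have h := alternatingString_sublist_of_sameColorConn hxy hdiamond (houtside _ horigin) horigin ms
    (by omega) (sameColorConn_origin_of_flooded hn hms t)
  rwa [hcentre, Nat.sub_zero] at h
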